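/- arXiv:2505.01241 — 4 statements merged into one kernel-verified Lean document; each statement's English description precedes it below -/
import Mathlib

section
/- Let 𝔤 be a complex filiform Lie algebra of dimension n ≥ 2. Then for every integer k ≥ 2 one has the equality of bracket ideals [C^k𝔤, C^k𝔤] = [C^k𝔤, C^{k+1}𝔤]; in particular dim[C^k𝔤,C^k𝔤] = dim[C^{k+1}𝔤,C^k𝔤] = dim[C^k𝔤,C^{k+1}𝔤]. -/
open Module

variable (L : Type) [LieRing L] [LieAlgebra ℂ L]

/-- `C L k` is the `k`-th term of the lower central series of `L`,
with the convention `C L 1 = L`. -/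
def C (k : ℕ) : LieIdeal ℂ L := LieModule.lowerCentralSeries ℂ L L (k - 1)

/-- `L` is a filiform Lie algebra of dimension `n`. -/
def IsFiliform (n : ℕ) : Prop :=
  2 ≤ n ∧ FiniteDimensional ℂ L ∧ finrank ℂ L = n ∧
    ∀ k, 2 ≤ k → k ≤ n → finrank ℂ (C L k) = n - k

/-- `e 1, …, e n` is an adapted basis of `L`. -/
def IsAdaptedBasis (n : ℕ) (e : ℕ → L) : Prop :=
  (∃ b : Basis (Fin n) ℂ L, ∀ i : Fin n, b i = e (i.1 + 1)) ∧
  (∀ h, 3 ≤ h → h ≤ n → ⁅e 1, e h⁆ = e (h - 1)) ∧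
  (∀ h, 1 ≤ h → h ≤ n → ⁅e 2, e h⁆ = 0) ∧
  (∀ h, 2 ≤ h → h ≤ n → ⁅e 3, e h⁆ = 0)

/-- `L` is (isomorphic to) the model filiform Lie algebra of dimension `n`,
i.e. it admits a basis whose only nonzero brackets are `⁅e 1, e h⁆ = e (h-1)`. -/
def IsModel (n : ℕ) : Prop :=
  ∃ e : ℕ → L,
    (∃ b : Basis (Fin n) ℂ L, ∀ i : Fin n, b i = e (i.1 + 1)) ∧
    (∀ h, 3 ≤ h → h ≤ n → ⁅e 1, e h⁆ = e (h - 1)) ∧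
    ⁅e 1, e 2⁆ = 0 ∧
    (∀ i j, 2 ≤ i → i < j → j ≤ n → ⁅e i, e j⁆ = 0)

/-- `L` is a non-model filiform Lie algebra with associated triple `(z₁, z₂, n)`. -/
def HasTriple (z₁ z₂ n : ℕ) : Prop :=
  IsFiliform L n ∧ ¬ IsModel L n ∧
  ∀ e : ℕ → L, IsAdaptedBasis L n e →
    IsLeast {k | 4 ≤ k ∧ ⁅e k, e n⁆ ≠ 0} z₁ ∧
    IsLeast {k | 4 ≤ k ∧ ⁅e k, e (k + 1)⁆ ≠ 0} z₂

/-- `θ_k(L)`: the least `ℓ ≥ 1` with `⁅C^k L, C^ℓ L⁆ = 0`. -/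
noncomputable def theta (k : ℕ) : ℕ := sInf {ℓ | 1 ≤ ℓ ∧ ⁅C L k, C L ℓ⁆ = ⊥}

/-- `P h u` is the `h`-th coordinate of `u` in the basis `e 1, …, e n` (and `0` for
`h` outside `{1, …, n}`). -/
def IsCoords (n : ℕ) (e : ℕ → L) (P : ℕ → L → ℂ) : Prop :=
  (∀ u : L, u = ∑ h ∈ Finset.Icc 1 n, P h u • e h) ∧
  (∀ u : L, ∀ h, h ∉ Finset.Icc 1 n → P h u = 0)

/-- `(α, γ, β)` is a family of parameters associated with `L` (with triple `(z₁, z₂, n)`)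
with respect to the adapted basis `e` with coordinate functions `P`. -/
def IsAssocParams (z₁ z₂ n : ℕ) (e : ℕ → L) (P : ℕ → L → ℂ)
    (α γ : ℕ → ℂ) (β : ℕ → ℕ → ℂ) : Prop :=
  (∀ i, i ≤ z₂ - z₁ →
    ⁅e (z₁ + i), e (z₂ + 1)⁆ = ∑ m ∈ Finset.Icc 1 (i + 1), α m • e (i + 3 - m)) ∧
  (∀ j, 2 ≤ j → j ≤ n - z₂ →
    ⁅e z₁, e (z₂ + j)⁆ =
      α 1 • e (j + 1) + ∑ m ∈ Finset.Icc 1 (j - 1), γ m • e (j + 1 - m)) ∧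
  (∀ k ℓ, 2 ≤ ℓ → ℓ ≤ n - z₂ → 1 ≤ k → k < z₂ - z₁ + ℓ →
    ⁅e (z₁ + k), e (z₂ + ℓ)⁆ =
      (∑ h ∈ Finset.Icc 2 (k + ℓ),
        P h (⁅e (z₁ + k - 1), e (z₂ + ℓ)⁆ + ⁅e (z₁ + k), e (z₂ + ℓ - 1)⁆) • e (h + 1))
      + β k ℓ • e 2)

/-! Since `C^{k+1} ⊆ C^k` has codimension one, `C^k = ℂ x ⊕ C^{k+1}` for some `x`; bracketing two
elements of `C^k`, the `x`-components meet only in `⁅x, x⁆ = 0`, so every bracket lies in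
`⁅C^k, C^{k+1}⁆`. Past the dimension, `C^k = 0` and both sides vanish. -/

theorem Submodule.exists_le_span_singleton_sup_of_finrank_eq_succ {K V : Type*} [DivisionRing K]
    [AddCommGroup V] [Module K V] {I J : Submodule K V} [FiniteDimensional K I] (hJI : J ≤ I)
    (hrank : finrank K J + 1 = finrank K I) : ∃ x ∈ I, I ≤ span K {x} ⊔ J := by
  obtain ⟨x, hxI, hxJ⟩ := SetLike.exists_of_lt (hJI.lt_of_ne fun h => by subst h; omega)
  refine ⟨x, hxI, (eq_of_le_of_finrank_le (sup_le ?_ hJI) ?_).ge⟩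
  · exact (span_singleton_le_iff_mem x I).mpr hxI
  · have hJlt : J < span K {x} ⊔ J :=
      lt_of_le_of_ne le_sup_right fun h => hxJ (h ▸ mem_sup_left (mem_span_singleton_self x))
    have : FiniteDimensional K ↥(span K {x} ⊔ J) :=
      Submodule.finiteDimensional_of_le (sup_le ((span_singleton_le_iff_mem x I).mpr hxI) hJI)
    have := finrank_lt_finrank_of_lt hJlt
    omega

theorem LieSubmodule.lie_self_eq_lie_of_le_span_singleton_sup {R L : Type*} [CommRing R]
    [LieRing L] [LieAlgebra R L] {I J : LieIdeal R L} (hJI : J ≤ I) {x : L} (hx : x ∈ I)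
    (hspan : (I : Submodule R L) ≤ Submodule.span R {x} ⊔ J) : ⁅I, I⁆ = ⁅I, J⁆ := by
  refine le_antisymm ?_ (mono_lie_right I hJI)
  rw [lie_le_iff]
  intro a ha b hb
  obtain ⟨y, hy, z, hz, rfl⟩ := Submodule.mem_sup.mp (hspan ha)
  obtain ⟨s, rfl⟩ := Submodule.mem_span_singleton.mp hy
  obtain ⟨y', hy', w, hw, rfl⟩ := Submodule.mem_sup.mp (hspan hb)
  obtain ⟨t, rfl⟩ := Submodule.mem_span_singleton.mp hy'
  have hexpand : ⁅s • x + z, t • x + w⁆ = s • ⁅x, w⁆ + (t • -⁅x, z⁆ + ⁅z, w⁆) := by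
    simp only [add_lie, lie_add, smul_lie, lie_smul, lie_self, smul_zero, lie_skew]
    abel_nf
  rw [hexpand]
  have hxw : ⁅x, w⁆ ∈ ⁅I, J⁆ := lie_mem_lie hx hw
  have hxz : ⁅x, z⁆ ∈ ⁅I, J⁆ := lie_mem_lie hx hz
  have hzw : ⁅z, w⁆ ∈ ⁅I, J⁆ := lie_mem_lie (hJI hz) hw
  exact add_mem (Submodule.smul_mem _ s hxw) (add_mem (Submodule.smul_mem _ t (neg_mem hxz)) hzw)

variable {L}

theorem C_antitone : Antitone (C L) := fun _ _ hkl =>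
  LieModule.antitone_lowerCentralSeries ℂ L L (Nat.sub_le_sub_right hkl 1)

namespace IsFiliform

variable {n : ℕ}

theorem C_eq_bot (hfil : IsFiliform L n) {k : ℕ} (hnk : n ≤ k) : C L k = ⊥ := by
  obtain ⟨hn, hfin, -, hranks⟩ := hfil
  have hCn : C L n = ⊥ := by
    rw [← LieSubmodule.toSubmodule_eq_bot, ← Submodule.finrank_eq_zero]
    exact (hranks n hn le_rfl).trans (Nat.sub_self n)
  exact le_bot_iff.mp (hCn ▸ C_antitone hnk)

theorem finrank_C_succ_add_one (hfil : IsFiliform L n) {k : ℕ} (hk : 2 ≤ k) (hkn : k < n) :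
    finrank ℂ (C L (k + 1)) + 1 = finrank ℂ (C L k) := by
  obtain ⟨-, -, -, hranks⟩ := hfil
  rw [hranks k hk hkn.le, hranks (k + 1) (by omega) hkn]
  omega

theorem lie_C_self_eq (hfil : IsFiliform L n) {k : ℕ} (hk : 2 ≤ k) :
    (⁅C L k, C L k⁆ : LieIdeal ℂ L) = ⁅C L k, C L (k + 1)⁆ := by
  obtain hkn | hnk := lt_or_ge k n
  · have : FiniteDimensional ℂ L := hfil.2.1
    obtain ⟨x, hx, hspan⟩ := Submodule.exists_le_span_singleton_sup_of_finrank_eq_succ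
      (C_antitone k.le_succ) (hfil.finrank_C_succ_add_one hk hkn)
    exact LieSubmodule.lie_self_eq_lie_of_le_span_singleton_sup (C_antitone k.le_succ) hx hspan
  · rw [hfil.C_eq_bot hnk, LieSubmodule.bot_lie, LieSubmodule.bot_lie]

end IsFiliform

variable (L)

/-- For a complex filiform Lie algebra `L` of dimension `n ≥ 2` and every `k ≥ 2`,
`⁅C^k L, C^k L⁆ = ⁅C^k L, C^(k+1) L⁆`; in particular the three dimensions coincide. -/
theorem statement0 (n : ℕ) (hfil : IsFiliform L n) (k : ℕ) (hk : 2 ≤ k) :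
    (⁅C L k, C L k⁆ : LieIdeal ℂ L) = ⁅C L k, C L (k + 1)⁆ ∧
    finrank ℂ (⁅C L k, C L k⁆ : LieIdeal ℂ L) =
      finrank ℂ (⁅C L (k + 1), C L k⁆ : LieIdeal ℂ L) ∧
    finrank ℂ (⁅C L k, C L k⁆ : LieIdeal ℂ L) =
      finrank ℂ (⁅C L k, C L (k + 1)⁆ : LieIdeal ℂ L) := by
  have h := hfil.lie_C_self_eq hk
  exact ⟨h, by rw [h, LieSubmodule.lie_comm], by rw [h]⟩
end

section
/- Let 𝔤 be a non-model complex filiform Lie algebra of dimension n with invariant z2 and write z2* = n+1−z2. Then [C^{z2*}𝔤, C^{z2*}𝔤] = 0 and [C^{z2*−1}𝔤, C^{z2*}𝔤] ≠ 0; that is, θ_{z2*}(𝔤) = z2*. -/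
open Module

variable (L : Type) [LieRing L] [LieAlgebra ℂ L]

/-!
With respect to an adapted basis, `C^{z₂*} = span (e 2, …, e z₂)`. Minimality of `z₂` says that
the consecutive brackets `⁅e k, e (k+1)⁆` vanish for `k < z₂`, and the Jacobi identity with `e 1`,
which lowers indices by one, propagates this to all brackets among `e 2, …, e z₂`: so `C^{z₂*}` is
abelian, while `⁅e (z₂+1), e z₂⁆ ≠ 0` with `e (z₂+1) ∈ C^{z₂*-1}`.

Since `z₂` is defined through adapted bases, one also needs that they exist (Vergne): for `x`
outside finitely many proper subspaces, `ad x` maps each line `C^k / C^{k+1}` onto the next one,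
and `e h = (ad x)^(n-h) v` works once `v` is corrected by a multiple of `x` so that
`⁅e 3, e n⁆ = 0`.
-/

open LieModule Submodule

section LinearAlgebra

variable {K V : Type*} [Field K] [AddCommGroup V] [Module K V]

lemma Submodule.exists_forall_notMem_of_ne_top [Infinite K] {ι : Type*} (s : Finset ι)
    (p : ι → Submodule K V) (hp : ∀ i ∈ s, p i ≠ ⊤) : ∃ x, ∀ i ∈ s, x ∉ p i := by
  have hunion := iUnion_ssubset_of_forall_ne_top_of_card_lt (Finset.univ : Finset s)
    (fun i => p i) (fun i => hp i i.2) (by simp [ENat.card_eq_top_of_infinite])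
  obtain ⟨x, -, hx⟩ := Set.exists_of_ssubset hunion
  simp only [Finset.mem_univ, Set.iUnion_true, Set.mem_iUnion, not_exists] at hx
  exact ⟨x, fun i hi => hx ⟨i, hi⟩⟩

lemma Submodule.le_span_image_of_le_span_singleton_sup {P : ℕ → Submodule K V} {w : ℕ → V}
    {a b : ℕ} (hab : a ≤ b) (hP : ∀ k, a ≤ k → k < b → P k ≤ (K ∙ w k) ⊔ P (k + 1))
    (hb : P b = ⊥) : P a ≤ span K (w '' Set.Ico a b) := by
  induction h : b - a generalizing a with
  | zero => rw [show a = b by omega, hb]; exact bot_le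
  | succ d ih =>
    refine (hP a le_rfl (by omega)).trans (sup_le ?_ ?_)
    · exact span_mono (Set.singleton_subset_iff.2 ⟨a, ⟨le_rfl, by omega⟩, rfl⟩)
    · exact (ih (by omega) (fun k hk => hP k (by omega)) (by omega)).trans
        (span_mono (Set.image_mono (Set.Ico_subset_Ico_left (Nat.le_succ a))))

variable [FiniteDimensional K V]

lemma Submodule.finrank_lt_finrank_span_singleton_sup {P : Submodule K V} {w : V} (hw : w ∉ P) :
    finrank K P < finrank K ↥((K ∙ w) ⊔ P) :=
  finrank_lt_finrank_of_lt <|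
    lt_of_le_of_ne le_sup_right fun h => hw (h ▸ mem_sup_left (mem_span_singleton_self w))

lemma Submodule.le_span_singleton_sup_of_finrank_le {P Q : Submodule K V} {w : V} (hPQ : P ≤ Q)
    (hQ : finrank K Q ≤ finrank K P + 1) (hwQ : w ∈ Q) (hwP : w ∉ P) : Q ≤ (K ∙ w) ⊔ P := by
  have hle : (K ∙ w) ⊔ P ≤ Q := sup_le ((span_singleton_le_iff_mem _ _).2 hwQ) hPQ
  have hlt := finrank_lt_finrank_span_singleton_sup hwP
  exact (eq_of_le_of_finrank_le hle (by omega)).ge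

lemma Submodule.exists_span_pair_sup_eq_top {P : Submodule K V}
    (hP : finrank K V = finrank K P + 2) {x : V} (hx : x ∉ P) : ∃ v, span K {x, v} ⊔ P = ⊤ := by
  obtain ⟨v, -, hv⟩ : ∃ v ∈ ⊤, v ∉ (K ∙ x) ⊔ P := by
    refine SetLike.exists_of_lt (lt_top_iff_ne_top.2 fun h => ?_)
    have hsup := finrank_add_le_finrank_add_finrank (K ∙ x) P
    rw [h, finrank_top, finrank_span_singleton (ne_of_mem_of_not_mem P.zero_mem hx).symm] at hsup
    omega
  refine ⟨v, eq_top_of_finrank_eq (le_antisymm (finrank_le _) ?_)⟩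
  have hxP := finrank_lt_finrank_span_singleton_sup hx
  have hv' := finrank_lt_finrank_span_singleton_sup hv
  rw [show span K {x, v} ⊔ P = (K ∙ v) ⊔ ((K ∙ x) ⊔ P) by
    rw [span_insert, ← sup_assoc, sup_comm (K ∙ x)]]
  omega

end LinearAlgebra

section LowerCentralSeries

variable {R L : Type*} [CommRing R] [LieRing L] [LieAlgebra R L]

local notation "D" => lowerCentralSeries R L L

lemma lie_mem_lowerCentralSeries_succ (x : L) {y : L} {k : ℕ} (hy : y ∈ D k) :
    ⁅x, y⁆ ∈ D (k + 1) := by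
  rw [lowerCentralSeries_succ]
  exact LieSubmodule.lie_mem_lie (LieSubmodule.mem_top x) hy

variable (R L) in
/-- The `z` for which `ad z : D k / D (k+1) → D (k+1) / D (k+2)` vanishes. -/
def lcsDegenerate (k : ℕ) : Submodule R L where
  carrier := {z | ∀ d ∈ D k, ⁅z, d⁆ ∈ D (k + 2)}
  add_mem' ha hb d hd := by rw [add_lie]; exact add_mem (ha d hd) (hb d hd)
  zero_mem' d _ := by rw [zero_lie]; exact zero_mem _
  smul_mem' c z hz d hd := by rw [smul_lie]; exact (D (k + 2)).smul_mem c (hz d hd)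

lemma lcsDegenerate_ne_top {k : ℕ} (h : D (k + 1) ≠ D (k + 2)) : lcsDegenerate R L k ≠ ⊤ := by
  intro htop
  refine h (le_antisymm ?_ (antitone_lowerCentralSeries R L L (Nat.le_succ _)))
  rw [lowerCentralSeries_succ, LieSubmodule.lie_le_iff]
  intro z _ d hd
  exact (htop ▸ mem_top : z ∈ lcsDegenerate R L k) d hd

lemma lie_notMem_of_notMem_lcsDegenerate {k : ℕ} {x w : L} (hx : x ∉ lcsDegenerate R L k)
    (hD : (D k).toSubmodule ≤ span R {x, w} ⊔ (D (k + 1)).toSubmodule) :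
    ⁅x, w⁆ ∉ D (k + 2) := by
  intro hxw
  refine hx fun d hd => ?_
  obtain ⟨s, hs, d', hd', rfl⟩ := mem_sup.1 (hD hd)
  obtain ⟨a, b, rfl⟩ := mem_span_pair.1 hs
  rw [lie_add, lie_add, lie_smul, lie_smul, lie_self, smul_zero, zero_add]
  exact add_mem ((D (k + 2)).smul_mem b hxw) (lie_mem_lowerCentralSeries_succ x hd')

end LowerCentralSeries

section Jacobi

variable {L : Type*} [LieRing L] {e : ℕ → L}

lemma lie_eq_zero_of_lie_last_eq_zero {n : ℕ}
    (hstep : ∀ h, 3 ≤ h → h ≤ n → ⁅e 1, e h⁆ = e (h - 1)) (hcent : ∀ u : L, ⁅e 2, u⁆ = 0)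
    (hlast : ⁅e 3, e n⁆ = 0) {h : ℕ} (h2 : 2 ≤ h) (hn : h ≤ n) : ⁅e 3, e h⁆ = 0 := by
  induction hd : n - h generalizing h with
  | zero => rwa [show h = n by omega]
  | succ d ih =>
    have h31 : ⁅e 3, e 1⁆ = -e 2 := by rw [← lie_skew, hstep 3 le_rfl (by omega)]
    rw [← show ⁅e 1, e (h + 1)⁆ = e h from hstep (h + 1) (by omega) (by omega), leibniz_lie, h31,
      ih (by omega) (by omega) (by omega), neg_lie, hcent, neg_zero, lie_zero, add_zero]

lemma lie_eq_zero_of_lie_succ_eq_zero {z : ℕ}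
    (hstep : ∀ h, 3 ≤ h → h ≤ z → ⁅e 1, e h⁆ = e (h - 1))
    (hsucc : ∀ k, 2 ≤ k → k < z → ⁅e k, e (k + 1)⁆ = 0) :
    ∀ d i, 2 ≤ i → i + d ≤ z → ⁅e i, e (i + d)⁆ = 0
  | 0, i, _, _ => lie_self _
  | 1, i, hi, hz => hsucc i hi (by omega)
  | d + 2, i, hi, hz => by
    rw [← show ⁅e 1, e (i + 1)⁆ = e i from hstep (i + 1) (by omega) (by omega), lie_lie,
      show i + (d + 2) = i + 1 + (d + 1) by omega,
      lie_eq_zero_of_lie_succ_eq_zero hstep hsucc (d + 1) (i + 1) (by omega) (by omega), lie_zero,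
      hstep _ (by omega) (by omega), show i + 1 + (d + 1) - 1 = i + 1 + d by omega,
      lie_eq_zero_of_lie_succ_eq_zero hstep hsucc d (i + 1) (by omega) (by omega), sub_zero]

end Jacobi

namespace IsFiliform

variable {L} {n : ℕ}

local notation "D" => lowerCentralSeries ℂ L L

lemma finrank_lcs (hf : IsFiliform L n) {j : ℕ} (h1 : 1 ≤ j) (h2 : j ≤ n - 1) :
    finrank ℂ (D j).toSubmodule = n - 1 - j := by
  have h := hf.2.2.2 (j + 1) (by omega) (by omega)
  rwa [show n - (j + 1) = n - 1 - j by omega] at h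

lemma lcs_eq_bot (hf : IsFiliform L n) {j : ℕ} (h : n - 1 ≤ j) : D j = ⊥ := by
  have := hf.2.1
  refine le_bot_iff.1 ((antitone_lowerCentralSeries ℂ L L h).trans_eq ?_)
  rw [← LieSubmodule.toSubmodule_eq_bot, ← finrank_eq_zero,
    hf.finrank_lcs (by have := hf.1; omega) le_rfl]
  omega

lemma lcs_ne_lcs_succ (hf : IsFiliform L n) {j : ℕ} (h : j + 2 ≤ n) : D j ≠ D (j + 1) := by
  intro heq
  have h1 := hf.finrank_lcs (j := j + 1) (by omega) (by omega)
  rw [← heq] at h1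
  rcases j with _ | j
  · rw [lowerCentralSeries_zero, LieSubmodule.top_toSubmodule, finrank_top, hf.2.2.1] at h1
    omega
  · rw [hf.finrank_lcs (by omega) (by omega)] at h1
    omega

lemma exists_notMem_lcsDegenerate (hf : IsFiliform L n) :
    ∃ x : L, x ∉ D 1 ∧ ∀ k, k + 3 ≤ n → x ∉ lcsDegenerate ℂ L k := by
  obtain ⟨x, hx⟩ := exists_forall_notMem_of_ne_top (K := ℂ) (Finset.range (n - 1))
    (fun | 0 => (D 1).toSubmodule | k + 1 => lcsDegenerate ℂ L k) <| by
      rintro (_ | k) hk <;> simp only [Finset.mem_range] at hk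
      · rw [Ne, LieSubmodule.toSubmodule_eq_top, ← lowerCentralSeries_zero ℂ L L]
        exact (hf.lcs_ne_lcs_succ (by have := hf.1; omega)).symm
      · exact lcsDegenerate_ne_top (hf.lcs_ne_lcs_succ (by omega))
  have := hf.1
  exact ⟨x, hx 0 (Finset.mem_range.2 (by omega)),
    fun k hk => hx (k + 1) (Finset.mem_range.2 (by omega))⟩

lemma exists_span_pair_sup_eq_top (hf : IsFiliform L n) {x : L} (hx : x ∉ D 1) :
    ∃ v, span ℂ {x, v} ⊔ (D 1).toSubmodule = ⊤ := by
  have := hf.2.1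
  refine Submodule.exists_span_pair_sup_eq_top ?_ hx
  rw [hf.finrank_lcs le_rfl (by have := hf.1; omega), hf.2.2.1]
  have := hf.1
  omega

lemma notMem_lcs_one_of_span_pair_sup_eq_top (hf : IsFiliform L n) {x v : L}
    (hxv : span ℂ {x, v} ⊔ (D 1).toSubmodule = ⊤) : v ∉ D 1 := by
  intro hv
  have := hf.2.1
  have hle : span ℂ {x, v} ⊔ (D 1).toSubmodule ≤ (ℂ ∙ x) ⊔ (D 1).toSubmodule := by
    rw [span_insert]
    exact sup_le (sup_le le_sup_left ((span_singleton_le_iff_mem _ _).2 (mem_sup_right hv)))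
      le_sup_right
  have hsup := (finrank_mono hle).trans (finrank_add_le_finrank_add_finrank _ _)
  rw [hxv, finrank_top, hf.2.2.1, hf.finrank_lcs le_rfl (by have := hf.1; omega)] at hsup
  have hx : finrank ℂ (ℂ ∙ x) ≤ 1 := by simpa using finrank_span_le_card (R := ℂ) ({x} : Set L)
  have := hf.1
  omega

lemma lcs_le_span_singleton_sup (hf : IsFiliform L n) {k : ℕ} (hk : 1 ≤ k) (hkn : k + 2 ≤ n)
    {w : L} (hw : w ∈ D k) (hw' : w ∉ D (k + 1)) :
    (D k).toSubmodule ≤ (ℂ ∙ w) ⊔ (D (k + 1)).toSubmodule := by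
  have := hf.2.1
  refine le_span_singleton_sup_of_finrank_le
    (antitone_lowerCentralSeries ℂ L L (Nat.le_succ k)) ?_ hw hw'
  rw [hf.finrank_lcs hk (by omega), hf.finrank_lcs (by omega) (by omega)]
  omega

section Chain

variable {x v : L}

lemma iterate_notMem_lcs_succ (hf : IsFiliform L n)
    (hx : ∀ k, k + 3 ≤ n → x ∉ lcsDegenerate ℂ L k)
    (hxv : span ℂ {x, v} ⊔ (D 1).toSubmodule = ⊤) :
    ∀ k, k + 2 ≤ n → (toEnd ℂ L L x)^[k] v ∉ D (k + 1)
  | 0, _ => hf.notMem_lcs_one_of_span_pair_sup_eq_top hxv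
  | k + 1, hk => by
    have ih := iterate_notMem_lcs_succ hf hx hxv k (by omega)
    have hD : (D k).toSubmodule ≤
        span ℂ {x, (toEnd ℂ L L x)^[k] v} ⊔ (D (k + 1)).toSubmodule := by
      rcases Nat.eq_zero_or_pos k with rfl | hk1
      · rw [Function.iterate_zero, id, hxv]
        exact le_top
      · refine (hf.lcs_le_span_singleton_sup hk1 (by omega)
          (iterate_toEnd_mem_lowerCentralSeries ℂ L L x v k) ih).trans (sup_le_sup_right ?_ _)
        exact span_mono (Set.subset_insert _ _)
    rw [Function.iterate_succ_apply', toEnd_apply_apply]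
    exact lie_notMem_of_notMem_lcsDegenerate (hx k (by omega)) hD

lemma lcs_le_span_iterate (hf : IsFiliform L n) (hx : ∀ k, k + 3 ≤ n → x ∉ lcsDegenerate ℂ L k)
    (hxv : span ℂ {x, v} ⊔ (D 1).toSubmodule = ⊤) :
    (D 1).toSubmodule ≤ span ℂ ((fun k => (toEnd ℂ L L x)^[k] v) '' Set.Ico 1 (n - 1)) := by
  have := hf.1
  refine le_span_image_of_le_span_singleton_sup (P := fun k => (D k).toSubmodule) (by omega)
    (fun k hk hkn => ?_) (by rw [LieSubmodule.toSubmodule_eq_bot]; exact hf.lcs_eq_bot le_rfl)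
  exact hf.lcs_le_span_singleton_sup hk (by omega)
    (iterate_toEnd_mem_lowerCentralSeries ℂ L L x v k)
    (hf.iterate_notMem_lcs_succ hx hxv k (by omega))

lemma top_le_span_iterate (hf : IsFiliform L n) (hx : ∀ k, k + 3 ≤ n → x ∉ lcsDegenerate ℂ L k)
    (hxv : span ℂ {x, v} ⊔ (D 1).toSubmodule = ⊤) :
    ⊤ ≤ span ℂ (insert x ((fun k => (toEnd ℂ L L x)^[k] v) '' Set.Iio (n - 1))) := by
  have := hf.1
  rw [← hxv]
  refine sup_le (span_mono (Set.insert_subset_insert ?_)) ((hf.lcs_le_span_iterate hx hxv).trans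
    (span_mono ((Set.image_mono Set.Ico_subset_Iio_self).trans (Set.subset_insert _ _))))
  exact Set.singleton_subset_iff.2 ⟨0, Set.mem_Iio.2 (by omega), rfl⟩

lemma exists_lie_iterate_eq_zero (hf : IsFiliform L n)
    (hx : ∀ k, k + 3 ≤ n → x ∉ lcsDegenerate ℂ L k)
    (hxv : span ℂ {x, v} ⊔ (D 1).toSubmodule = ⊤) :
    ∃ v', span ℂ {x, v'} ⊔ (D 1).toSubmodule = ⊤ ∧ ⁅(toEnd ℂ L L x)^[n - 3] v', v'⁆ = 0 := by
  rcases le_or_gt n 3 with hn | hn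
  · exact ⟨v, hxv, by rw [show n - 3 = 0 by omega]; exact lie_self v⟩
  set w : ℕ → L := fun k => (toEnd ℂ L L x)^[k] v
  have hwx : ⁅w (n - 3), x⁆ = -w (n - 2) := by
    rw [← lie_skew, show n - 2 = n - 3 + 1 by omega]
    simp only [w, Function.iterate_succ_apply', toEnd_apply_apply]
  -- `D (n - 2)` is the line through `w (n - 2)`.
  obtain ⟨c, hc⟩ : ∃ c : ℂ, c • w (n - 2) = ⁅w (n - 3), v⁆ := by
    have hle := hf.lcs_le_span_singleton_sup (k := n - 2) (by omega) (by omega)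
      (iterate_toEnd_mem_lowerCentralSeries ℂ L L x v _)
      (hf.iterate_notMem_lcs_succ hx hxv (n - 2) (by omega))
    rw [hf.lcs_eq_bot (j := n - 2 + 1) (by omega), LieSubmodule.bot_toSubmodule, sup_bot_eq] at hle
    refine mem_span_singleton.1 (hle ?_)
    rw [← lie_skew, show n - 2 = n - 3 + 1 by omega]
    exact neg_mem (lie_mem_lowerCentralSeries_succ v
      (iterate_toEnd_mem_lowerCentralSeries ℂ L L x v _))
  refine ⟨v + c • x, top_unique (hxv ▸ sup_le_sup_right (span_le.2 ?_) _), ?_⟩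
  · refine Set.insert_subset_iff.2 ⟨subset_span (by simp), Set.singleton_subset_iff.2 ?_⟩
    simpa using sub_mem (subset_span (by simp) : v + c • x ∈ span ℂ {x, v + c • x})
      (smul_mem _ c (subset_span (by simp) : x ∈ span ℂ {x, v + c • x}))
  · have hshift : (toEnd ℂ L L x)^[n - 3] (v + c • x) = w (n - 3) := by
      rw [show n - 3 = n - 4 + 1 by omega, Function.iterate_succ_apply, toEnd_apply_apply,
        lie_add, lie_smul, lie_self, smul_zero, add_zero]
      rfl
    rw [hshift, lie_add, ← hc, lie_smul, hwx, smul_neg, add_neg_cancel]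

end Chain

theorem exists_isAdaptedBasis (hf : IsFiliform L n) :
    ∃ e : ℕ → L, IsAdaptedBasis L n e ∧ ∀ h, n < h → e h = 0 := by
  have hn := hf.1
  obtain ⟨x, hx1, hx⟩ := hf.exists_notMem_lcsDegenerate
  obtain ⟨v₀, hxv₀⟩ := hf.exists_span_pair_sup_eq_top hx1
  obtain ⟨v, hxv, hlast⟩ := hf.exists_lie_iterate_eq_zero hx hxv₀
  set w : ℕ → L := fun k => (toEnd ℂ L L x)^[k] v
  set e : ℕ → L := fun h => if h = 1 then x else if h ≤ n then w (n - h) else 0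
  have he1 : e 1 = x := if_pos rfl
  have hew : ∀ h, 2 ≤ h → h ≤ n → e h = w (n - h) := fun h h2 hhn => by
    simp only [e, if_neg (show h ≠ 1 by omega), if_pos hhn]
  have hstep : ∀ h, 3 ≤ h → h ≤ n → ⁅e 1, e h⁆ = e (h - 1) := fun h h3 hhn => by
    rw [he1, hew h (by omega) hhn, hew (h - 1) (by omega) (by omega),
      show n - (h - 1) = n - h + 1 by omega]
    simp only [w, Function.iterate_succ_apply', toEnd_apply_apply]
  have hcent : ∀ u : L, ⁅e 2, u⁆ = 0 := fun u => by
    rw [hew 2 le_rfl hn, ← lie_skew, neg_eq_zero, ← LieSubmodule.mem_bot (R := ℂ) (L := L),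
      ← hf.lcs_eq_bot (j := n - 2 + 1) (by omega)]
    exact lie_mem_lowerCentralSeries_succ u (iterate_toEnd_mem_lowerCentralSeries ℂ L L x v _)
  have he3n : ⁅e 3, e n⁆ = 0 := by
    rcases eq_or_lt_of_le hn with rfl | hn3
    · simp [e]
    · rwa [hew 3 (by omega) (by omega), hew n (by omega) le_rfl, Nat.sub_self]
  have hspan : ⊤ ≤ span ℂ (Set.range fun i : Fin n => e (i + 1)) := by
    refine (hf.top_le_span_iterate hx hxv).trans (span_mono ?_)
    rintro _ (rfl | ⟨k, hk, rfl⟩)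
    · exact ⟨⟨0, by omega⟩, he1⟩
    · simp only [Set.mem_Iio] at hk
      refine ⟨⟨n - k - 1, by omega⟩, ?_⟩
      change e (n - k - 1 + 1) = w k
      rw [hew _ (by omega) (by omega), show n - (n - k - 1 + 1) = k by omega]
  have := hf.2.1
  refine ⟨e, ⟨?_, hstep, fun h _ _ => hcent (e h),
    fun h h2 hhn => lie_eq_zero_of_lie_last_eq_zero hstep hcent he3n h2 hhn⟩,
    fun h hh => by simp only [e, if_neg (show h ≠ 1 by omega), if_neg (show ¬h ≤ n by omega)]⟩
  exact ⟨basisOfTopLeSpanOfCardEqFinrank _ hspan (by rw [Fintype.card_fin, hf.2.2.1]),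
    fun i => by rw [coe_basisOfTopLeSpanOfCardEqFinrank]⟩

end IsFiliform

namespace IsAdaptedBasis

variable {L} {n : ℕ} {e : ℕ → L}

lemma mem_C (he : IsAdaptedBasis L n e) {h k : ℕ} (h2 : 2 ≤ h) (hk : h + k ≤ n + 1) :
    e h ∈ C L k := by
  change e h ∈ lowerCentralSeries ℂ L L (k - 1)
  induction hj : k - 1 generalizing h k with
  | zero => exact LieSubmodule.mem_top _
  | succ j ih =>
    have hstep : ⁅e 1, e (h + 1)⁆ = e h := he.2.1 (h + 1) (by omega) (by omega)
    rw [← hstep]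
    exact lie_mem_lowerCentralSeries_succ _ (ih (k := k - 1) (by omega) (by omega) (by omega))

lemma C_eq_span (hf : IsFiliform L n) (he : IsAdaptedBasis L n e) {k : ℕ} (h2 : 2 ≤ k)
    (hk : k ≤ n) : (C L k).toSubmodule = span ℂ (e '' Set.Icc 2 (n + 1 - k)) := by
  have := hf.2.1
  obtain ⟨b, hb⟩ := he.1
  have hrange : Set.range (fun i : Fin (n - k) => e (i + 2)) = e '' Set.Icc 2 (n + 1 - k) := by
    ext y
    constructor
    · rintro ⟨i, rfl⟩
      exact ⟨i + 2, ⟨by omega, by omega⟩, rfl⟩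
    · rintro ⟨h, ⟨hh2, hhn⟩, rfl⟩
      exact ⟨⟨h - 2, by omega⟩, by simp only [Nat.sub_add_cancel hh2]⟩
  have hli : LinearIndependent ℂ (fun i : Fin (n - k) => e (i + 2)) := by
    convert b.linearIndependent.comp (fun i : Fin (n - k) => (⟨i + 1, by omega⟩ : Fin n))
      (fun i j hij => by simpa [Fin.ext_iff] using hij) using 1
    ext i
    simp [hb]
  refine (eq_of_le_of_finrank_le (span_le.2 ?_) ?_).symm
  · rintro _ ⟨h, ⟨hh2, hhn⟩, rfl⟩
    exact he.mem_C hh2 (by omega)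
  · rw [← hrange, finrank_span_eq_card hli, Fintype.card_fin]
    exact (hf.2.2.2 k h2 hk).le

lemma lie_eq_zero_of_le (he : IsAdaptedBasis L n e) {z : ℕ} (hzn : z ≤ n)
    (hsucc : ∀ k, 4 ≤ k → k < z → ⁅e k, e (k + 1)⁆ = 0) {i j : ℕ} (hi : 2 ≤ i) (hiz : i ≤ z)
    (hj : 2 ≤ j) (hjz : j ≤ z) : ⁅e i, e j⁆ = 0 := by
  wlog hij : i ≤ j
  · rw [← lie_skew, this he hzn hsucc hj hjz hi hiz (by omega), neg_zero]
  obtain ⟨d, rfl⟩ := Nat.exists_eq_add_of_le hij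
  refine lie_eq_zero_of_lie_succ_eq_zero (fun h h3 hhz => he.2.1 h h3 (by omega))
    (fun k hk hkz => ?_) d i hi hjz
  rcases (by omega : k = 2 ∨ k = 3 ∨ 4 ≤ k) with rfl | rfl | hk4
  · exact he.2.2.1 3 (by omega) (by omega)
  · exact he.2.2.2 4 (by omega) (by omega)
  · exact hsucc k hk4 hkz

lemma lie_C_self_eq_bot (hf : IsFiliform L n) (he : IsAdaptedBasis L n e) {z : ℕ} (hz : 1 ≤ z)
    (hzn : z < n) (hsucc : ∀ k, 4 ≤ k → k < z → ⁅e k, e (k + 1)⁆ = 0) :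
    ⁅C L (n + 1 - z), C L (n + 1 - z)⁆ = ⊥ := by
  have hspan := he.C_eq_span hf (k := n + 1 - z) (by omega) (by omega)
  rw [show n + 1 - (n + 1 - z) = z by omega] at hspan
  rw [LieSubmodule.lie_eq_bot_iff]
  intro a ha b hb
  rw [← LieSubmodule.mem_toSubmodule, hspan] at ha hb
  have hab := LinearMap.BilinMap.apply_apply_mem_of_mem_span ⊥ _ _
    (toEnd ℂ L L : L →ₗ[ℂ] Module.End ℂ L) ?_ a b ha hb
  · simpa using hab
  · rintro _ ⟨i, ⟨hi, hiz⟩, rfl⟩ _ ⟨j, ⟨hj, hjz⟩, rfl⟩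
    simpa using he.lie_eq_zero_of_le hzn.le hsucc hi hiz hj hjz

lemma lie_C_pred_ne_bot (he : IsAdaptedBasis L n e) {z : ℕ} (hz : 2 ≤ z) (hzn : z < n)
    (hne : ⁅e z, e (z + 1)⁆ ≠ 0) : ⁅C L (n + 1 - z - 1), C L (n + 1 - z)⁆ ≠ ⊥ := by
  rw [Ne, LieSubmodule.lie_eq_bot_iff]
  intro h
  exact hne (by rw [← lie_skew, h _ (he.mem_C (by omega) (by omega)) _
    (he.mem_C hz (by omega)), neg_zero])

end IsAdaptedBasis

variable {L} in
lemma theta_eq_self {k : ℕ} (hk : ⁅C L k, C L k⁆ = ⊥) (hk' : ⁅C L (k - 1), C L k⁆ ≠ ⊥) :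
    theta L k = k := by
  have hk1 : 1 ≤ k := by
    by_contra h0
    rw [show k = 0 by omega] at hk hk'
    exact hk' hk
  refine IsLeast.csInf_eq ⟨⟨hk1, hk⟩, fun ℓ ⟨hℓ1, hℓ⟩ => ?_⟩
  by_contra! hlt
  refine hk' (le_bot_iff.1 (hℓ ▸ ?_))
  rw [LieSubmodule.lie_comm]
  exact LieSubmodule.mono_lie_right _ (antitone_lowerCentralSeries ℂ L L (by omega))

/-- For a non-model filiform Lie algebra with triple `(z₁, z₂, n)` and `z₂* = n + 1 - z₂`:
`⁅C^{z₂*}, C^{z₂*}⁆ = 0`, `⁅C^{z₂*-1}, C^{z₂*}⁆ ≠ 0`, i.e. `θ_{z₂*} = z₂*`. -/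
theorem statement1 (z₁ z₂ n : ℕ) (h : HasTriple L z₁ z₂ n) :
    (⁅C L (n + 1 - z₂), C L (n + 1 - z₂)⁆ : LieIdeal ℂ L) = ⊥ ∧
    (⁅C L (n + 1 - z₂ - 1), C L (n + 1 - z₂)⁆ : LieIdeal ℂ L) ≠ ⊥ ∧
    theta L (n + 1 - z₂) = n + 1 - z₂ := by
  obtain ⟨hf, -, htriple⟩ := h
  obtain ⟨e, he, he0⟩ := hf.exists_isAdaptedBasis
  obtain ⟨-, ⟨hz4, hz⟩, hzmin⟩ := htriple e he
  have hzn : z₂ < n := by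
    by_contra! hnz
    exact hz (by rw [he0 (z₂ + 1) (by omega), lie_zero])
  have hsucc : ∀ k, 4 ≤ k → k < z₂ → ⁅e k, e (k + 1)⁆ = 0 := fun k hk hkz => by
    by_contra hne
    exact absurd (hzmin ⟨hk, hne⟩) (by omega)
  have habel := he.lie_C_self_eq_bot hf (by omega) hzn hsucc
  have hne := he.lie_C_pred_ne_bot (by omega) hzn hz
  exact ⟨habel, hne, theta_eq_self habel hne⟩
end

section
/- Let 𝔤 be an n-dimensional non-model complex filiform Lie algebra with associated triple (z1,z2,n) and let {e_1,…,e_n} be an adapted basis of 𝔤. Then there exists a family of parameters associated with 𝔤 with respect to {e_1,…,e_n}; that is, there exist complex numbers α_i (1 ≤ i ≤ z2−z1+1), γ_j (1 ≤ j ≤ n−z2−1) and β_{k,ℓ} (2 ≤ ℓ ≤ n−z2, 1 ≤ k < z2−z1+ℓ) such that [e_{z1+i},e_{z2+1}] = α_1 e_{i+2} + α_2 e_{i+1} + … + α_{i+1} e_2 for 0 ≤ i ≤ z2−z1; [e_{z1},e_{z2+j}] = α_1 e_{j+1} + γ_1 e_j + … + γ_{j−1} e_2 for 2 ≤ j ≤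 n−z2; and [e_{z1+k},e_{z2+ℓ}] = Σ_{h=2}^{k+ℓ} P_h([e_{z1+k−1},e_{z2+ℓ}] + [e_{z1+k},e_{z2+ℓ−1}]) e_{h+1} + β_{k,ℓ} e_2 for 2 ≤ ℓ ≤ n−z2 and 1 ≤ k < z2−z1+ℓ, where P_h(u) denotes the h-th coordinate of u ∈ 𝔤 in the basis {e_1,…,e_n}. -/
open Module

variable (L : Type) [LieRing L] [LieAlgebra ℂ L]

section AuxCCN

variable {L : Type} [LieRing L] [LieAlgebra ℂ L] {n : ℕ} {e : ℕ → L} {P : ℕ → L → ℂ}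

omit [LieAlgebra ℂ L] in
private lemma lie_sum' (x : L) (s : Finset ℕ) (f : ℕ → L) :
    ⁅x, ∑ h ∈ s, f h⁆ = ∑ h ∈ s, ⁅x, f h⁆ := by
  induction s using Finset.cons_induction with
  | empty => simp
  | cons a s ha ih => rw [Finset.sum_cons, Finset.sum_cons, lie_add, ih]

omit [LieAlgebra ℂ L] in
private lemma sum_icc_fin (f : ℕ → L) :
    ∑ h ∈ Finset.Icc 1 n, f h = ∑ i : Fin n, f (i.1 + 1) := by
  rw [Fin.sum_univ_eq_sum_range (fun i => f (i + 1)), Finset.range_eq_Ico]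
  apply Finset.sum_nbij' (fun a => a - 1) (fun a => a + 1) <;> intros <;>
    simp_all [Finset.mem_Icc, Finset.mem_Ico] <;> omega

private lemma coords_unique (hP : IsCoords L n e P) (b : Basis (Fin n) ℂ L)
    (hb : ∀ i : Fin n, b i = e (i.1 + 1)) {u : L} {c : ℕ → ℂ}
    (hu : ∑ h ∈ Finset.Icc 1 n, c h • e h = u) {h : ℕ} (h1 : 1 ≤ h) (h2 : h ≤ n) :
    P h u = c h := by
  have hu' : ∑ i : Fin n, c (i.1 + 1) • b i = u := by
    rw [← hu, sum_icc_fin (fun h => c h • e h)]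
    exact Finset.sum_congr rfl fun i _ => by rw [hb]
  have hu'' : ∑ i : Fin n, P (i.1 + 1) u • b i = u := by
    conv_rhs => rw [hP.1 u]
    rw [sum_icc_fin (fun h => P h u • e h)]
    exact (Finset.sum_congr rfl fun i _ => by rw [hb]).symm
  have hz : ∑ i : Fin n, (P (i.1 + 1) u - c (i.1 + 1)) • b i = 0 := by
    simp only [sub_smul, Finset.sum_sub_distrib, hu', hu'', sub_self]
  have h0 := Fintype.linearIndependent_iff.mp b.linearIndependent _ hz ⟨h - 1, by omega⟩
  rw [sub_eq_zero] at h0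
  have hh : h - 1 + 1 = h := by omega
  rwa [hh] at h0

private lemma coords_spec (hP : IsCoords L n e P) (b : Basis (Fin n) ℂ L)
    (hb : ∀ i : Fin n, b i = e (i.1 + 1)) {u : L} {s : Finset ℕ} {c : ℕ → ℂ}
    (hs : s ⊆ Finset.Icc 1 n) (hu : ∑ h ∈ s, c h • e h = u) (h : ℕ) :
    P h u = if h ∈ s then c h else 0 := by
  by_cases hmem : h ∈ Finset.Icc 1 n
  · have hIcc : ∑ x ∈ Finset.Icc 1 n, (if x ∈ s then c x else 0) • e x = u := by
      rw [← Finset.sum_subset hs (fun x _ hxs => by simp [hxs]), ← hu]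
      exact Finset.sum_congr rfl fun x hx => by simp [hx]
    rw [coords_unique hP b hb hIcc (Finset.mem_Icc.mp hmem).1 (Finset.mem_Icc.mp hmem).2]
  · rw [hP.2 u h hmem, if_neg (fun hin => hmem (hs hin))]

private lemma P_zero (hP : IsCoords L n e P) (b : Basis (Fin n) ℂ L)
    (hb : ∀ i : Fin n, b i = e (i.1 + 1)) (h : ℕ) : P h (0 : L) = 0 := by
  have := coords_spec hP b hb (u := (0 : L)) (s := ∅) (c := 0) (by simp) (by simp) h
  simpa using this

private lemma P_add (hP : IsCoords L n e P) (b : Basis (Fin n) ℂ L)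
    (hb : ∀ i : Fin n, b i = e (i.1 + 1)) (u v : L) (h : ℕ) :
    P h (u + v) = P h u + P h v := by
  by_cases hmem : h ∈ Finset.Icc 1 n
  · refine coords_unique hP b hb (c := fun h => P h u + P h v) ?_
      (Finset.mem_Icc.mp hmem).1 (Finset.mem_Icc.mp hmem).2
    simp only [add_smul, Finset.sum_add_distrib]
    rw [← hP.1 u, ← hP.1 v]
  · rw [hP.2 _ _ hmem, hP.2 _ _ hmem, hP.2 _ _ hmem, add_zero]

private lemma e_ne_zero (b : Basis (Fin n) ℂ L)
    (hb : ∀ i : Fin n, b i = e (i.1 + 1)) {h : ℕ} (h1 : 1 ≤ h) (h2 : h ≤ n) : e h ≠ 0 := by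
  have hv : (⟨h - 1, by omega⟩ : Fin n).1 + 1 = h := by simp only [Fin.val_mk]; omega
  have : e h = b ⟨h - 1, by omega⟩ := by rw [hb, hv]
  rw [this]; exact b.ne_zero _

private lemma expand_from_coords (hP : IsCoords L n e P) {u : L} {m : ℕ} {c : ℕ → ℂ}
    (hm : m ≤ n) (hc : ∀ h, P h u = if 2 ≤ h ∧ h ≤ m then c h else 0) :
    u = ∑ h ∈ Finset.Icc 2 m, c h • e h := by
  conv_lhs => rw [hP.1 u]
  rw [← Finset.sum_subset (show Finset.Icc 2 m ⊆ Finset.Icc 1 n by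
      intro x hx; simp only [Finset.mem_Icc] at *; omega)
    (fun x hx hxs => by
      simp only [Finset.mem_Icc] at hx hxs
      rw [hc x, if_neg (by omega), zero_smul])]
  refine Finset.sum_congr rfl fun x hx => ?_
  simp only [Finset.mem_Icc] at hx
  rw [hc x, if_pos (by omega)]

private lemma lie_e1_expand (hP : IsCoords L n e P)
    (he1 : ∀ h, 3 ≤ h → h ≤ n → ⁅e 1, e h⁆ = e (h - 1))
    (he2 : ∀ h, 1 ≤ h → h ≤ n → ⁅e 2, e h⁆ = 0)
    (hn : 3 ≤ n) (u : L) :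
    ⁅e 1, u⁆ = ∑ h ∈ Finset.Icc 2 (n - 1), P (h + 1) u • e h := by
  conv_lhs => rw [hP.1 u]
  rw [lie_sum']
  have h12 : ⁅e 1, e 2⁆ = 0 := by
    rw [← lie_skew (e 1) (e 2), he2 1 le_rfl (by omega), neg_zero]
  rw [← Finset.sum_subset (show Finset.Icc 3 n ⊆ Finset.Icc 1 n by
      intro x hx; simp only [Finset.mem_Icc] at *; omega)
    (fun x hx hxs => by
      simp only [Finset.mem_Icc] at hx hxs
      rcases (show x = 1 ∨ x = 2 by omega) with rfl | rfl
      · rw [lie_smul, lie_self, smul_zero]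
      · rw [lie_smul, h12, smul_zero])]
  refine Finset.sum_nbij' (fun a => a - 1) (fun a => a + 1) ?_ ?_ ?_ ?_ ?_ <;>
    intro a ha <;> simp only [Finset.mem_Icc] at *
  · omega
  · omega
  · omega
  · omega
  · rw [lie_smul, he1 a (by omega) (by omega)]
    congr 2
    omega

private lemma coords_lie_e1 (hP : IsCoords L n e P) (b : Basis (Fin n) ℂ L)
    (hb : ∀ i : Fin n, b i = e (i.1 + 1))
    (he1 : ∀ h, 3 ≤ h → h ≤ n → ⁅e 1, e h⁆ = e (h - 1))
    (he2 : ∀ h, 1 ≤ h → h ≤ n → ⁅e 2, e h⁆ = 0)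
    (hn : 3 ≤ n) (u : L) (h : ℕ) :
    P h ⁅e 1, u⁆ = if h ∈ Finset.Icc 2 (n - 1) then P (h + 1) u else 0 :=
  coords_spec hP b hb
    (by intro x hx; simp only [Finset.mem_Icc] at *; omega)
    (lie_e1_expand hP he1 he2 hn u).symm h

private lemma P1_bracket (hP : IsCoords L n e P) (b : Basis (Fin n) ℂ L)
    (hb : ∀ i : Fin n, b i = e (i.1 + 1))
    (he1 : ∀ h, 3 ≤ h → h ≤ n → ⁅e 1, e h⁆ = e (h - 1))
    (he3 : ∀ h, 2 ≤ h → h ≤ n → ⁅e 3, e h⁆ = 0)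
    (hn : 3 ≤ n) {a c : ℕ}
    (ha2 : 2 ≤ a) (han : a ≤ n) (hc2 : 2 ≤ c) (hcn : c ≤ n) :
    P 1 ⁅e a, e c⁆ = 0 := by
  have h30 : ⁅e 3, ⁅e a, e c⁆⁆ = 0 := by
    rw [leibniz_lie, he3 a ha2 han, he3 c hc2 hcn, zero_lie, lie_zero, add_zero]
  rw [hP.1 ⁅e a, e c⁆, lie_sum'] at h30
  rw [Finset.sum_eq_single_of_mem 1 (by simp only [Finset.mem_Icc]; omega)
    (fun x hx hne => by
      simp only [Finset.mem_Icc] at hx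
      rw [lie_smul, he3 x (by omega) (by omega), smul_zero])] at h30
  have h31 : ⁅e 3, e 1⁆ = -e 2 := by
    rw [← lie_skew (e 3) (e 1), he1 3 le_rfl hn]
  rw [lie_smul, h31, smul_neg, neg_eq_zero, smul_eq_zero] at h30
  rcases h30 with h30 | h30
  · exact h30
  · exact absurd h30 (e_ne_zero b hb (by omega) (by omega))

private lemma W1
    (he1 : ∀ h, 3 ≤ h → h ≤ n → ⁅e 1, e h⁆ = e (h - 1))
    (he2 : ∀ h, 1 ≤ h → h ≤ n → ⁅e 2, e h⁆ = 0)
    (he3 : ∀ h, 2 ≤ h → h ≤ n → ⁅e 3, e h⁆ = 0)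
    {z1 : ℕ} (hz1min : ∀ k, 4 ≤ k → k < z1 → ⁅e k, e n⁆ = 0) :
    ∀ k, 2 ≤ k → k < z1 → ∀ j, k < j → j ≤ n → ⁅e k, e j⁆ = 0 := by
  intro k
  induction k using Nat.strong_induction_on with
  | _ k ih =>
    intro hk2 hkz1 j hkj hjn
    rcases Nat.lt_or_ge k 4 with hk4 | hk4
    · interval_cases k
      · exact he2 j (by omega) hjn
      · exact he3 j (by omega) hjn
    · have key : ∀ m, k < n - m → ⁅e k, e (n - m)⁆ = 0 := by
        intro m
        induction m with
        | zero => intro _; simpa using hz1min k hk4 hkz1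
        | succ m ihm =>
          intro hlt
          have hnm3 : 3 ≤ n - m := by omega
          have hb1 : ⁅e 1, e (n - m)⁆ = e (n - m - 1) := he1 _ hnm3 (by omega)
          have hrec : ⁅e k, e (n - m)⁆ = 0 := ihm (by omega)
          have hk1 : ⁅e 1, e k⁆ = e (k - 1) := he1 k (by omega) (by omega)
          have hkm1 : ⁅e (k - 1), e (n - m)⁆ = 0 := by
            rcases Nat.lt_or_ge (k - 1) 4 with h4 | h4
            · have h3 : k - 1 = 3 := by omega
              rw [h3]; exact he3 _ (by omega) (by omega)
            · exact ih (k - 1) (by omega) (by omega) (by omega) _ (by omega) (by omega)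
          have heq : n - (m + 1) = n - m - 1 := by omega
          rw [heq, ← hb1, leibniz_lie, ← lie_skew (e k) (e 1), hk1, neg_lie, hkm1, hrec,
            lie_zero, neg_zero, zero_add]
      have := key (n - j) (by omega)
      rwa [show n - (n - j) = j from by omega] at this

private lemma W1'
    (he1 : ∀ h, 3 ≤ h → h ≤ n → ⁅e 1, e h⁆ = e (h - 1))
    (he2 : ∀ h, 1 ≤ h → h ≤ n → ⁅e 2, e h⁆ = 0)
    (he3 : ∀ h, 2 ≤ h → h ≤ n → ⁅e 3, e h⁆ = 0)
    {z1 : ℕ} (hz1min : ∀ k, 4 ≤ k → k < z1 → ⁅e k, e n⁆ = 0)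
    {a c : ℕ} (ha2 : 2 ≤ a) (han : a ≤ n) (hc2 : 2 ≤ c) (hcn : c ≤ n)
    (hlt : a < z1 ∨ c < z1) : ⁅e a, e c⁆ = 0 := by
  rcases lt_trichotomy a c with hac | rfl | hca
  · exact W1 he1 he2 he3 hz1min a ha2 (by omega) c hac hcn
  · exact lie_self _
  · rw [← lie_skew (e a) (e c), W1 he1 he2 he3 hz1min c hc2 (by omega) a hca han, neg_zero]

private lemma W2core
    (he1 : ∀ h, 3 ≤ h → h ≤ n → ⁅e 1, e h⁆ = e (h - 1))
    {z1 z2 : ℕ}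
    (hz2min : ∀ k, 4 ≤ k → k < z2 → ⁅e k, e (k + 1)⁆ = 0)
    (hz14 : 4 ≤ z1) (hz2n : z2 < n) :
    ∀ d i j, j - i = d → z1 ≤ i → i < j → j ≤ z2 → ⁅e i, e j⁆ = 0 := by
  intro d
  induction d using Nat.strong_induction_on with
  | _ d ihd =>
    intro i j hd hi hij hj
    rcases eq_or_lt_of_le (Nat.succ_le_of_lt hij) with heq | hlt
    · rw [← heq]; exact hz2min i (by omega) (by omega)
    · have hA : ⁅e (i + 1), e j⁆ = 0 :=
        ihd (j - (i + 1)) (by omega) (i + 1) j rfl (by omega) (by omega) (by omega)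
      have hB : ⁅e (i + 1), e (j - 1)⁆ = 0 := by
        rcases eq_or_lt_of_le (show i + 1 ≤ j - 1 by omega) with heq2 | hlt2
        · rw [heq2]; exact lie_self _
        · exact ihd (j - 1 - (i + 1)) (by omega) (i + 1) (j - 1) rfl (by omega) (by omega)
            (by omega)
      have h1 : ⁅e 1, e (i + 1)⁆ = e i := by
        have := he1 (i + 1) (by omega) (by omega)
        rwa [show i + 1 - 1 = i from by omega] at this
      have h2 : ⁅e 1, e j⁆ = e (j - 1) := he1 j (by omega) (by omega)
      have hJ := leibniz_lie (e 1) (e (i + 1)) (e j)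
      rw [hA, lie_zero, h1, h2, hB, add_zero] at hJ
      exact hJ.symm

private lemma W2sym
    (he1 : ∀ h, 3 ≤ h → h ≤ n → ⁅e 1, e h⁆ = e (h - 1))
    (he2 : ∀ h, 1 ≤ h → h ≤ n → ⁅e 2, e h⁆ = 0)
    (he3 : ∀ h, 2 ≤ h → h ≤ n → ⁅e 3, e h⁆ = 0)
    {z1 z2 : ℕ}
    (hz1min : ∀ k, 4 ≤ k → k < z1 → ⁅e k, e n⁆ = 0)
    (hz2min : ∀ k, 4 ≤ k → k < z2 → ⁅e k, e (k + 1)⁆ = 0)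
    (hz14 : 4 ≤ z1) (hz2n : z2 < n) {a c : ℕ}
    (ha : 2 ≤ a) (haz : a ≤ z2) (hc : 2 ≤ c) (hcz : c ≤ z2) : ⁅e a, e c⁆ = 0 := by
  rcases lt_trichotomy a c with h | rfl | h
  · rcases Nat.lt_or_ge a z1 with h1 | h1
    · exact W1 he1 he2 he3 hz1min a ha h1 c h (by omega)
    · exact W2core he1 hz2min hz14 hz2n (c - a) a c rfl h1 h hcz
  · exact lie_self _
  · rw [← lie_skew (e a) (e c)]
    rcases Nat.lt_or_ge c z1 with h1 | h1
    · rw [W1 he1 he2 he3 hz1min c hc h1 a h (by omega), neg_zero]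
    · rw [W2core he1 hz2min hz14 hz2n (a - c) c a rfl h1 h haz, neg_zero]

end AuxCCN


section AuxCCN2

variable {L : Type} [LieRing L] [LieAlgebra ℂ L] {n : ℕ} {e : ℕ → L} {P : ℕ → L → ℂ}

private lemma Gmain (hP : IsCoords L n e P) (b : Basis (Fin n) ℂ L)
    (hb : ∀ i : Fin n, b i = e (i.1 + 1))
    (he1 : ∀ h, 3 ≤ h → h ≤ n → ⁅e 1, e h⁆ = e (h - 1))
    (he2 : ∀ h, 1 ≤ h → h ≤ n → ⁅e 2, e h⁆ = 0)
    (he3 : ∀ h, 2 ≤ h → h ≤ n → ⁅e 3, e h⁆ = 0)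
    {z1 z2 : ℕ}
    (hz1min : ∀ k, 4 ≤ k → k < z1 → ⁅e k, e n⁆ = 0)
    (hz2min : ∀ k, 4 ≤ k → k < z2 → ⁅e k, e (k + 1)⁆ = 0)
    (hz14 : 4 ≤ z1) (hz12 : z1 ≤ z2) (hz2n : z2 + 1 ≤ n) :
    ∀ s k ℓ, k + ℓ = s → 1 ≤ ℓ → z1 + k + 1 ≤ z2 + ℓ → z2 + ℓ ≤ n →
      ∀ h, h ∉ Finset.Icc 2 (k + ℓ + 1) → P h ⁅e (z1 + k), e (z2 + ℓ)⁆ = 0 := by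
  intro s
  induction s using Nat.strong_induction_on with
  | _ s ihs =>
    intro k ℓ hs hℓ hcon hzn h hh
    have hn3 : 3 ≤ n := by omega
    have hT1 : ∀ x, x ∉ Finset.Icc 2 (k + ℓ) → P x ⁅e (z1 + k - 1), e (z2 + ℓ)⁆ = 0 := by
      rcases Nat.eq_zero_or_pos k with rfl | hk
      · intro x _
        rw [show z1 + 0 - 1 = z1 - 1 from by omega,
          W1' he1 he2 he3 hz1min (by omega) (by omega) (by omega) hzn (Or.inl (by omega))]
        exact P_zero hP b hb x
      · intro x hx
        rw [show z1 + k - 1 = z1 + (k - 1) from by omega]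
        exact ihs (k - 1 + ℓ) (by omega) (k - 1) ℓ rfl hℓ (by omega) hzn x
          (by simp only [Finset.mem_Icc] at *; omega)
    have hT2 : ∀ x, x ∉ Finset.Icc 2 (k + ℓ) → P x ⁅e (z1 + k), e (z2 + ℓ - 1)⁆ = 0 := by
      rcases eq_or_lt_of_le hℓ with hℓ1 | hℓ2
      · intro x _
        rw [show z2 + ℓ - 1 = z2 from by omega,
          W2sym he1 he2 he3 hz1min hz2min hz14 (by omega) (by omega) (by omega) (by omega)
            le_rfl]
        exact P_zero hP b hb x
      · rcases eq_or_lt_of_le hcon with heq | hlt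
        · intro x _
          rw [show z2 + ℓ - 1 = z1 + k from by omega, lie_self]
          exact P_zero hP b hb x
        · intro x hx
          rw [show z2 + ℓ - 1 = z2 + (ℓ - 1) from by omega]
          exact ihs (k + (ℓ - 1)) (by omega) k (ℓ - 1) rfl (by omega) (by omega) (by omega) x
            (by simp only [Finset.mem_Icc] at *; omega)
    by_cases hmem : h ∈ Finset.Icc 1 n
    · simp only [Finset.mem_Icc] at hmem hh
      rcases eq_or_lt_of_le hmem.1 with h1 | h2
      · rw [← h1]
        exact P1_bracket hP b hb he1 he3 hn3 (by omega) (by omega) (by omega) (by omega)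
      · have hge : k + ℓ + 2 ≤ h := by omega
        have hlie : ⁅e 1, ⁅e (z1 + k), e (z2 + ℓ)⁆⁆ =
            ⁅e (z1 + k - 1), e (z2 + ℓ)⁆ + ⁅e (z1 + k), e (z2 + ℓ - 1)⁆ := by
          rw [leibniz_lie, he1 (z1 + k) (by omega) (by omega), he1 (z2 + ℓ) (by omega) (by omega)]
        have hc := coords_lie_e1 hP b hb he1 he2 hn3 ⁅e (z1 + k), e (z2 + ℓ)⁆ (h - 1)
        rw [if_pos (by simp only [Finset.mem_Icc]; omega),
          show h - 1 + 1 = h from by omega] at hc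
        rw [← hc, hlie, P_add hP b hb, hT1 _ (by simp only [Finset.mem_Icc]; omega),
          hT2 _ (by simp only [Finset.mem_Icc]; omega), add_zero]
    · exact hP.2 _ _ hmem

private lemma cond1coords (hP : IsCoords L n e P) (b : Basis (Fin n) ℂ L)
    (hb : ∀ i : Fin n, b i = e (i.1 + 1))
    (he1 : ∀ h, 3 ≤ h → h ≤ n → ⁅e 1, e h⁆ = e (h - 1))
    (he2 : ∀ h, 1 ≤ h → h ≤ n → ⁅e 2, e h⁆ = 0)
    (he3 : ∀ h, 2 ≤ h → h ≤ n → ⁅e 3, e h⁆ = 0)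
    {z1 z2 : ℕ}
    (hz1min : ∀ k, 4 ≤ k → k < z1 → ⁅e k, e n⁆ = 0)
    (hz2min : ∀ k, 4 ≤ k → k < z2 → ⁅e k, e (k + 1)⁆ = 0)
    (hz14 : 4 ≤ z1) (hz12 : z1 ≤ z2) (hz2n : z2 + 1 ≤ n) :
    ∀ i, i ≤ z2 - z1 → ∀ h,
      P h ⁅e (z1 + i), e (z2 + 1)⁆ =
        if 2 ≤ h ∧ h ≤ i + 2 then P 2 ⁅e (z1 + (i + 2 - h)), e (z2 + 1)⁆ else 0 := by
  have hn3 : 3 ≤ n := by omega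
  intro i
  induction i with
  | zero =>
    intro _ h
    by_cases hx : 2 ≤ h ∧ h ≤ 0 + 2
    · rw [if_pos hx, show h = 2 from by omega]
    · rw [if_neg hx]
      exact Gmain hP b hb he1 he2 he3 hz1min hz2min hz14 hz12 hz2n (0 + 1) 0 1 rfl le_rfl
        (by omega) (by omega) h (by simp only [Finset.mem_Icc]; omega)
  | succ i ih =>
    intro hi h
    have hi' := ih (by omega)
    have hlie : ⁅e 1, ⁅e (z1 + (i + 1)), e (z2 + 1)⁆⁆ = ⁅e (z1 + i), e (z2 + 1)⁆ := by
      rw [leibniz_lie, he1 (z1 + (i + 1)) (by omega) (by omega),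
        he1 (z2 + 1) (by omega) (by omega),
        show z1 + (i + 1) - 1 = z1 + i from by omega, show z2 + 1 - 1 = z2 from by omega,
        W2sym he1 he2 he3 hz1min hz2min hz14 (by omega) (by omega) (by omega) (by omega) le_rfl,
        add_zero]
    by_cases hx : 2 ≤ h ∧ h ≤ i + 1 + 2
    · rcases eq_or_lt_of_le hx.1 with h2 | h3
      · rw [if_pos hx, ← h2, show i + 1 + 2 - 2 = i + 1 from by omega]
      · have hcl := coords_lie_e1 hP b hb he1 he2 hn3 ⁅e (z1 + (i + 1)), e (z2 + 1)⁆ (h - 1)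
        rw [if_pos (by simp only [Finset.mem_Icc]; omega),
          show h - 1 + 1 = h from by omega, hlie] at hcl
        rw [← hcl, hi' (h - 1), if_pos (⟨by omega, by omega⟩ : 2 ≤ h - 1 ∧ h - 1 ≤ i + 2),
          if_pos hx, show i + 2 - (h - 1) = i + 1 + 2 - h from by omega]
    · rw [if_neg hx]
      exact Gmain hP b hb he1 he2 he3 hz1min hz2min hz14 hz12 hz2n (i + 1 + 1) (i + 1) 1 rfl
        le_rfl (by omega) (by omega) h (by simp only [Finset.mem_Icc]; omega)

private lemma cond2coords (hP : IsCoords L n e P) (b : Basis (Fin n) ℂ L)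
    (hb : ∀ i : Fin n, b i = e (i.1 + 1))
    (he1 : ∀ h, 3 ≤ h → h ≤ n → ⁅e 1, e h⁆ = e (h - 1))
    (he2 : ∀ h, 1 ≤ h → h ≤ n → ⁅e 2, e h⁆ = 0)
    (he3 : ∀ h, 2 ≤ h → h ≤ n → ⁅e 3, e h⁆ = 0)
    {z1 z2 : ℕ}
    (hz1min : ∀ k, 4 ≤ k → k < z1 → ⁅e k, e n⁆ = 0)
    (hz2min : ∀ k, 4 ≤ k → k < z2 → ⁅e k, e (k + 1)⁆ = 0)
    (hz14 : 4 ≤ z1) (hz12 : z1 ≤ z2) (hz2n : z2 + 1 ≤ n) :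
    ∀ j, 1 ≤ j → j ≤ n - z2 → ∀ h,
      P h ⁅e z1, e (z2 + j)⁆ =
        if h = j + 1 then P 2 ⁅e z1, e (z2 + 1)⁆
        else if 2 ≤ h ∧ h ≤ j then P 2 ⁅e z1, e (z2 + (j - h) + 2)⁆ else 0 := by
  have hn3 : 3 ≤ n := by omega
  intro j
  induction j with
  | zero => omega
  | succ j ih =>
    intro _ hj h
    rcases Nat.eq_zero_or_pos j with rfl | hj1
    · by_cases hx : h = 0 + 1 + 1
      · rw [if_pos hx, hx]
      · rw [if_neg hx, if_neg (by omega)]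
        have := Gmain hP b hb he1 he2 he3 hz1min hz2min hz14 hz12 hz2n (0 + 1) 0 1 rfl le_rfl
          (by omega) (by omega) h (by simp only [Finset.mem_Icc]; omega)
        rwa [show z1 + 0 = z1 from by omega] at this
    · have ihj := ih hj1 (by omega)
      have hlie : ⁅e 1, ⁅e z1, e (z2 + (j + 1))⁆⁆ = ⁅e z1, e (z2 + j)⁆ := by
        rw [leibniz_lie, he1 z1 (by omega) (by omega),
          he1 (z2 + (j + 1)) (by omega) (by omega),
          show z2 + (j + 1) - 1 = z2 + j from by omega,
          W1' he1 he2 he3 hz1min (show 2 ≤ z1 - 1 by omega) (by omega) (by omega) (by omega)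
            (Or.inl (by omega)),
          zero_add]
      by_cases hx1 : h = j + 1 + 1
      · have hcl := coords_lie_e1 hP b hb he1 he2 hn3 ⁅e z1, e (z2 + (j + 1))⁆ (h - 1)
        rw [if_pos (by simp only [Finset.mem_Icc]; omega),
          show h - 1 + 1 = h from by omega, hlie] at hcl
        rw [← hcl, ihj (h - 1), if_pos (by omega), if_pos hx1]
      · by_cases hx2 : 2 ≤ h ∧ h ≤ j + 1
        · rcases eq_or_lt_of_le hx2.1 with h2 | h3
          · rw [if_neg hx1, if_pos hx2, ← h2,
              show z2 + (j + 1 - 2) + 2 = z2 + (j + 1) from by omega]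
          · have hcl := coords_lie_e1 hP b hb he1 he2 hn3 ⁅e z1, e (z2 + (j + 1))⁆ (h - 1)
            rw [if_pos (by simp only [Finset.mem_Icc]; omega),
              show h - 1 + 1 = h from by omega, hlie] at hcl
            rw [← hcl, ihj (h - 1), if_neg (by omega),
              if_pos (⟨by omega, by omega⟩ : 2 ≤ h - 1 ∧ h - 1 ≤ j),
              if_neg hx1, if_pos hx2,
              show z2 + (j - (h - 1)) + 2 = z2 + (j + 1 - h) + 2 from by omega]
        · rw [if_neg hx1, if_neg hx2]
          exact Gmain hP b hb he1 he2 he3 hz1min hz2min hz14 hz12 hz2n (0 + (j + 1)) 0 (j + 1)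
            rfl (by omega) (by omega) (by omega) h (by simp only [Finset.mem_Icc]; omega)

end AuxCCN2

/-- Existence of a family of parameters associated with a non-model filiform Lie algebra
with respect to any adapted basis (Theorem 2 of CCN). -/
theorem statement2 (z₁ z₂ n : ℕ) (h : HasTriple L z₁ z₂ n)
    (e : ℕ → L) (he : IsAdaptedBasis L n e)
    (P : ℕ → L → ℂ) (hP : IsCoords L n e P) :
    ∃ (α γ : ℕ → ℂ) (β : ℕ → ℕ → ℂ), IsAssocParams L z₁ z₂ n e P α γ β := by
  obtain ⟨hFil, -, hLeast⟩ := h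
  have hn2 : 2 ≤ n := hFil.1
  obtain ⟨⟨b, hb⟩, he1, he2, he3⟩ := he
  have he' : IsAdaptedBasis L n (fun m => if m ≤ n then e m else 0) := by
    refine ⟨⟨b, fun i => by beta_reduce; rw [if_pos (by omega)]; exact hb i⟩, ?_, ?_, ?_⟩
    · intro h h3 hhn
      beta_reduce
      rw [if_pos (by omega), if_pos hhn, if_pos (by omega)]
      exact he1 h h3 hhn
    · intro h h1 hhn
      beta_reduce
      rw [if_pos (by omega), if_pos hhn]
      exact he2 h h1 hhn
    · intro h h2 hhn
      beta_reduce
      by_cases h3 : 3 ≤ n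
      · rw [if_pos h3, if_pos hhn]; exact he3 h h2 hhn
      · rw [if_neg h3, zero_lie]
  obtain ⟨hL1', hL2'⟩ := hLeast _ he'
  obtain ⟨hL1, hL2⟩ := hLeast e ⟨⟨b, hb⟩, he1, he2, he3⟩
  have hz14 : 4 ≤ z₁ := hL1.1.1
  have hz24 : 4 ≤ z₂ := hL2.1.1
  have hz2n : z₂ + 1 ≤ n := by
    by_contra hcon
    apply hL2'.1.2
    rw [if_neg hcon, lie_zero]
  have hz1min : ∀ k, 4 ≤ k → k < z₁ → ⁅e k, e n⁆ = 0 := by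
    intro k h4 hk
    by_contra hne
    exact absurd (hL1.2 ⟨h4, hne⟩) (by omega)
  have hz2min : ∀ k, 4 ≤ k → k < z₂ → ⁅e k, e (k + 1)⁆ = 0 := by
    intro k h4 hk
    by_contra hne
    exact absurd (hL2.2 ⟨h4, hne⟩) (by omega)
  have hz12 : z₁ ≤ z₂ := by
    by_contra hcon
    exact hL2.1.2
      (W1 he1 he2 he3 hz1min z₂ (by omega) (by omega) (z₂ + 1) (by omega) (by omega))
  have hn3 : 3 ≤ n := by omega
  refine ⟨fun m => P 2 ⁅e (z₁ + (m - 1)), e (z₂ + 1)⁆,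
    fun m => P 2 ⁅e z₁, e (z₂ + m + 1)⁆,
    fun k ℓ => P 2 ⁅e (z₁ + k), e (z₂ + ℓ)⁆, ?_, ?_, ?_⟩
  · -- condition 1
    intro i hi
    have hco := cond1coords hP b hb he1 he2 he3 hz1min hz2min hz14 hz12 hz2n i hi
    have hexp := expand_from_coords hP (u := ⁅e (z₁ + i), e (z₂ + 1)⁆)
      (m := i + 2) (c := fun h => P 2 ⁅e (z₁ + (i + 2 - h)), e (z₂ + 1)⁆)
      (by omega) (fun h => by beta_reduce; rw [hco h])
    rw [hexp]
    refine Finset.sum_nbij' (fun h => i + 3 - h) (fun m => i + 3 - m) ?_ ?_ ?_ ?_ ?_ <;>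
      intro a ha <;> simp only [Finset.mem_Icc] at ha ⊢
    · omega
    · omega
    · omega
    · omega
    · simp only [show i + 3 - a - 1 = i + 2 - a from by omega,
        show i + 3 - (i + 3 - a) = a from by omega]
  · -- condition 2
    intro j hj2 hjn
    have hco := cond2coords hP b hb he1 he2 he3 hz1min hz2min hz14 hz12 hz2n j (by omega) hjn
    have hexp := expand_from_coords hP (u := ⁅e z₁, e (z₂ + j)⁆) (m := j + 1)
      (c := fun h => if h = j + 1 then P 2 ⁅e z₁, e (z₂ + 1)⁆
        else P 2 ⁅e z₁, e (z₂ + (j - h) + 2)⁆)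
      (by omega)
      (fun h => by
        beta_reduce
        rw [hco h]
        by_cases hx : h = j + 1
        · rw [if_pos hx, if_pos (by omega), if_pos hx]
        · by_cases hy : 2 ≤ h ∧ h ≤ j
          · rw [if_neg hx, if_pos hy, if_pos (by omega), if_neg hx]
          · rw [if_neg hx, if_neg hy, if_neg (by omega)])
    rw [hexp,
      Finset.sum_eq_sum_sdiff_singleton_add
        (show j + 1 ∈ Finset.Icc 2 (j + 1) from by simp only [Finset.mem_Icc]; omega),
      show Finset.Icc 2 (j + 1) \ {j + 1} = Finset.Icc 2 j from by
        ext x; simp only [Finset.mem_sdiff, Finset.mem_Icc, Finset.mem_singleton]; omega]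
    conv_rhs => rw [add_comm]
    congr 1
    · refine Finset.sum_nbij' (fun h => j + 1 - h) (fun m => j + 1 - m) ?_ ?_ ?_ ?_ ?_ <;>
        intro a ha <;> simp only [Finset.mem_Icc] at ha ⊢
      · omega
      · omega
      · omega
      · omega
      · rw [if_neg (by omega)]
        simp only [show z₂ + (j - a) + 2 = z₂ + (j + 1 - a) + 1 from by omega,
          show j + 1 - (j + 1 - a) = a from by omega]
    · beta_reduce
      rw [if_pos rfl]
      norm_num
  · -- condition 3
    intro k ℓ hℓ2 hℓn hk1 hk2
    have hc1 : z₁ + k + 1 ≤ z₂ + ℓ := by omega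
    have hzn : z₂ + ℓ ≤ n := by omega
    have hlie : ⁅e 1, ⁅e (z₁ + k), e (z₂ + ℓ)⁆⁆ =
        ⁅e (z₁ + k - 1), e (z₂ + ℓ)⁆ + ⁅e (z₁ + k), e (z₂ + ℓ - 1)⁆ := by
      rw [leibniz_lie, he1 (z₁ + k) (by omega) (by omega), he1 (z₂ + ℓ) (by omega) (by omega)]
    have hshift : ∀ x, 2 ≤ x → x ≤ n - 1 →
        P x (⁅e (z₁ + k - 1), e (z₂ + ℓ)⁆ + ⁅e (z₁ + k), e (z₂ + ℓ - 1)⁆) =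
          P (x + 1) ⁅e (z₁ + k), e (z₂ + ℓ)⁆ := by
      intro x hx2 hx3
      rw [← hlie, coords_lie_e1 hP b hb he1 he2 hn3 _ x,
        if_pos (by simp only [Finset.mem_Icc]; omega)]
    have hSout : ∀ x, x ∉ Finset.Icc 2 (n - 1) →
        P x (⁅e (z₁ + k - 1), e (z₂ + ℓ)⁆ + ⁅e (z₁ + k), e (z₂ + ℓ - 1)⁆) = 0 := by
      intro x hx
      rw [← hlie, coords_lie_e1 hP b hb he1 he2 hn3 _ x, if_neg hx]
    have hG := Gmain hP b hb he1 he2 he3 hz1min hz2min hz14 hz12 hz2n (k + ℓ) k ℓ rfl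
      (by omega) hc1 hzn
    have hexp : ⁅e (z₁ + k), e (z₂ + ℓ)⁆ =
        ∑ x ∈ Finset.Icc 1 n, P x ⁅e (z₁ + k), e (z₂ + ℓ)⁆ • e x := hP.1 _
    rw [← Finset.sum_subset (show Finset.Icc 2 n ⊆ Finset.Icc 1 n from by
        intro x hx; simp only [Finset.mem_Icc] at *; omega)
      (fun x hx hxs => by
        simp only [Finset.mem_Icc] at hx hxs
        rw [show x = 1 from by omega,
          P1_bracket hP b hb he1 he3 hn3 (by omega) (by omega) (by omega) (by omega),
          zero_smul])] at hexp
    rw [Finset.sum_eq_sum_sdiff_singleton_add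
        (show (2 : ℕ) ∈ Finset.Icc 2 n from by simp only [Finset.mem_Icc]; omega),
      show Finset.Icc 2 n \ {2} = Finset.Icc 3 n from by
        ext x; simp only [Finset.mem_sdiff, Finset.mem_Icc, Finset.mem_singleton]; omega]
      at hexp
    have hstep : ∑ x ∈ Finset.Icc 3 n, P x ⁅e (z₁ + k), e (z₂ + ℓ)⁆ • e x =
        ∑ x ∈ Finset.Icc 2 (n - 1),
          P x (⁅e (z₁ + k - 1), e (z₂ + ℓ)⁆ + ⁅e (z₁ + k), e (z₂ + ℓ - 1)⁆) • e (x + 1) := by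
      refine Finset.sum_nbij' (fun a => a - 1) (fun a => a + 1) ?_ ?_ ?_ ?_ ?_ <;>
        intro a ha <;> simp only [Finset.mem_Icc] at ha ⊢
      · omega
      · omega
      · omega
      · omega
      · rw [hshift (a - 1) (by omega) (by omega), show a - 1 + 1 = a from by omega]
    have htrim : ∑ x ∈ Finset.Icc 2 (n - 1),
          P x (⁅e (z₁ + k - 1), e (z₂ + ℓ)⁆ + ⁅e (z₁ + k), e (z₂ + ℓ - 1)⁆) • e (x + 1) =
        ∑ x ∈ Finset.Icc 2 (k + ℓ),
          P x (⁅e (z₁ + k - 1), e (z₂ + ℓ)⁆ + ⁅e (z₁ + k), e (z₂ + ℓ - 1)⁆) • e (x + 1) := by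
      rcases le_total (k + ℓ) (n - 1) with hle | hle
      · refine (Finset.sum_subset (show Finset.Icc 2 (k + ℓ) ⊆ Finset.Icc 2 (n - 1) from by
          intro x hx; simp only [Finset.mem_Icc] at *; omega) ?_).symm
        intro x hx hxs
        simp only [Finset.mem_Icc] at hx hxs
        rw [hshift x (by omega) (by omega),
          hG (x + 1) (by simp only [Finset.mem_Icc]; omega), zero_smul]
      · refine Finset.sum_subset (show Finset.Icc 2 (n - 1) ⊆ Finset.Icc 2 (k + ℓ) from by
          intro x hx; simp only [Finset.mem_Icc] at *; omega) ?_
        intro x hx hxs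
        rw [hSout x hxs, zero_smul]
    rw [hstep, htrim] at hexp
    exact hexp
end

section
/- Let 𝔤 be an n-dimensional non-model complex filiform Lie algebra with associated triple (z1,z2,n), let {e_1,…,e_n} be an adapted basis of 𝔤, and let (α,γ,β) be parameters associated with 𝔤 with respect to {e_1,…,e_n}. Then for every λ ∈ ℂ ∖ {0}, the family f_1 = e_1, f_i = λ e_i for 2 ≤ i ≤ n is again an adapted basis of 𝔤, and the scaled parameters (λα, λγ, λβ) (every α_i, γ_j and β_{k,ℓ} multiplied by λ) are parameters associated with 𝔤 with respect to {f_1,…,f_n}. -/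
open Module

variable (L : Type) [LieRing L] [LieAlgebra ℂ L]

/-- Homogeneity: scaling `e i` by `λ` for `i ≥ 2` yields again an adapted basis, with
associated parameters all multiplied by `λ`. -/
theorem statement3 (z₁ z₂ n : ℕ) (h : HasTriple L z₁ z₂ n)
    (e : ℕ → L) (he : IsAdaptedBasis L n e)
    (P : ℕ → L → ℂ) (hP : IsCoords L n e P)
    (α γ : ℕ → ℂ) (β : ℕ → ℕ → ℂ) (hpar : IsAssocParams L z₁ z₂ n e P α γ β)
    (lam : ℂ) (hlam : lam ≠ 0) (f : ℕ → L)
    (hf1 : f 1 = e 1) (hf : ∀ i, 2 ≤ i → f i = lam • e i) :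
    IsAdaptedBasis L n f ∧
    ∃ P' : ℕ → L → ℂ, IsCoords L n f P' ∧
      IsAssocParams L z₁ z₂ n f P' (fun i => lam * α i) (fun j => lam * γ j)
        (fun k ℓ => lam * β k ℓ) := by
  classical
  obtain ⟨⟨b, hb⟩, he1, he2, he3⟩ := he
  obtain ⟨hz1L, hz2L⟩ := h.2.2 e ⟨⟨b, hb⟩, he1, he2, he3⟩
  have hz1 : 4 ≤ z₁ := hz1L.1.1
  have hz2 : 4 ≤ z₂ := hz2L.1.1
  -- converting Icc sums to Fin sums
  have hsum_fin : ∀ (g : ℕ → ℂ),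
      (∑ h ∈ Finset.Icc 1 n, g h • e h) = ∑ i : Fin n, g (i.1 + 1) • b i := by
    intro g
    have hr : ∑ i : Fin n, g (i.1 + 1) • b i = ∑ k ∈ Finset.range n, g (k + 1) • e (k + 1) := by
      rw [← Fin.sum_univ_eq_sum_range (fun k => g (k + 1) • e (k + 1))]
      exact Finset.sum_congr rfl (fun i _ => by rw [hb i])
    rw [hr, show Finset.Icc 1 n = Finset.Ico 1 (n + 1) by rw [Finset.Ico_add_one_right_eq_Icc],
      Finset.sum_Ico_eq_sum_range]
    exact Finset.sum_congr (by norm_num) (fun k _ => by rw [Nat.add_comm 1 k])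
  -- uniqueness of coordinates
  have huniq : ∀ (g₁ g₂ : ℕ → ℂ),
      (∑ h ∈ Finset.Icc 1 n, g₁ h • e h) = (∑ h ∈ Finset.Icc 1 n, g₂ h • e h) →
      ∀ h ∈ Finset.Icc 1 n, g₁ h = g₂ h := by
    intro g₁ g₂ hgs h hh
    rw [hsum_fin g₁, hsum_fin g₂] at hgs
    have hz : ∑ i : Fin n, (g₁ (i.1 + 1) - g₂ (i.1 + 1)) • b i = 0 := by
      simp only [sub_smul, Finset.sum_sub_distrib, hgs, sub_self]
    have := Fintype.linearIndependent_iff.mp b.linearIndependent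
      (fun i => g₁ (i.1 + 1) - g₂ (i.1 + 1)) hz
    rw [Finset.mem_Icc] at hh
    have h1 : 1 ≤ h := hh.1
    have h2 : h ≤ n := hh.2
    have hlt : h - 1 < n := by omega
    have heq : h - 1 + 1 = h := by omega
    have h3 : g₁ h - g₂ h = 0 := by simpa [heq] using this ⟨h - 1, hlt⟩
    exact sub_eq_zero.mp h3
  -- scalar homogeneity of P
  have hsmul : ∀ (c : ℂ) (u : L) (h : ℕ), P h (c • u) = c * P h u := by
    intro c u h
    by_cases hh : h ∈ Finset.Icc 1 n
    · refine huniq (fun h => P h (c • u)) (fun h => c * P h u) ?_ h hh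
      have h1 := hP.1 (c • u)
      have h2 := hP.1 u
      rw [← h1]
      calc c • u = c • ∑ h ∈ Finset.Icc 1 n, P h u • e h := by rw [← h2]
        _ = ∑ h ∈ Finset.Icc 1 n, (c * P h u) • e h := by
            rw [Finset.smul_sum]; simp [smul_smul]
    · rw [hP.2 (c • u) h hh, hP.2 u h hh, mul_zero]
  -- bracket scaling
  have hbr : ∀ a c : ℕ, 2 ≤ a → 2 ≤ c → ⁅f a, f c⁆ = (lam * lam) • ⁅e a, e c⁆ := by
    intro a c ha hc
    rw [hf a ha, hf c hc, smul_lie, lie_smul, smul_smul]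
  -- adapted basis for f
  have hAB : IsAdaptedBasis L n f := by
    refine ⟨?_, ?_, ?_, ?_⟩
    · refine ⟨b.unitsSMul (fun i => if i.1 = 0 then 1 else Units.mk0 lam hlam), ?_⟩
      intro i
      rw [Basis.unitsSMul_apply]
      by_cases hi : i.1 = 0
      · simp [hi, hb i, hf1]
      · have h2 : 2 ≤ i.1 + 1 := by omega
        simp only [hi, if_false]
        rw [hf _ h2, hb i]
        rfl
    · intro h h3 hn
      have h2 : 2 ≤ h := by omega
      have h2' : 2 ≤ h - 1 := by omega
      rw [hf1, hf h h2, lie_smul, he1 h h3 hn, hf (h - 1) h2']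
    · intro h h1 hn
      rcases Nat.lt_or_ge h 2 with hlt | hge
      · have : h = 1 := by omega
        subst this
        rw [hf1, hf 2 le_rfl, smul_lie, he2 1 le_rfl (by omega), smul_zero]
      · rw [hbr 2 h le_rfl hge, he2 h (by omega) hn, smul_zero]
    · intro h h2 hn
      rw [hbr 3 h (by omega) h2, he3 h h2 hn, smul_zero]
  refine ⟨hAB, ⟨fun h u => if h = 1 then P 1 u else lam⁻¹ * P h u, ⟨?_, ?_⟩, ?_, ?_, ?_⟩⟩
  · -- coords property 1
    intro u
    conv_lhs => rw [hP.1 u]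
    apply Finset.sum_congr rfl
    intro i hi
    rw [Finset.mem_Icc] at hi
    by_cases h1 : i = 1
    · simp [h1, hf1]
    · have h2 : 2 ≤ i := by omega
      simp only [h1, if_false]
      rw [hf i h2, smul_smul, mul_comm, ← mul_assoc, mul_inv_cancel₀ hlam, one_mul]
  · -- coords property 2
    intro u h hh
    by_cases h1 : h = 1
    · simp only [h1, if_true]
      subst h1; exact hP.2 u 1 hh
    · simp only [h1, if_false, hP.2 u h hh, mul_zero]
  · -- params clause 1
    intro i hi
    rw [hbr (z₁ + i) (z₂ + 1) (by omega) (by omega), hpar.1 i hi, Finset.smul_sum]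
    apply Finset.sum_congr rfl
    intro m hm
    rw [Finset.mem_Icc] at hm
    have h2 : 2 ≤ i + 3 - m := by omega
    rw [hf _ h2]
    simp only [smul_smul]
    congr 1; ring
  · -- params clause 2
    intro j hj2 hjn
    rw [hbr z₁ (z₂ + j) (by omega) (by omega), hpar.2.1 j hj2 hjn, smul_add,
      Finset.smul_sum]
    congr 1
    · rw [hf (j + 1) (by omega)]; simp only [smul_smul]; congr 1; ring
    · apply Finset.sum_congr rfl
      intro m hm
      rw [Finset.mem_Icc] at hm
      rw [hf (j + 1 - m) (by omega)]; simp only [smul_smul]; congr 1; ring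
  · -- params clause 3
    intro k ℓ hl2 hln hk1 hk
    have hX' : ⁅f (z₁ + k - 1), f (z₂ + ℓ)⁆ + ⁅f (z₁ + k), f (z₂ + ℓ - 1)⁆
        = (lam * lam) • (⁅e (z₁ + k - 1), e (z₂ + ℓ)⁆ + ⁅e (z₁ + k), e (z₂ + ℓ - 1)⁆) := by
      rw [smul_add, hbr (z₁ + k - 1) (z₂ + ℓ) (by omega) (by omega),
        hbr (z₁ + k) (z₂ + ℓ - 1) (by omega) (by omega)]
    rw [hbr (z₁ + k) (z₂ + ℓ) (by omega) (by omega),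
      hpar.2.2 k ℓ hl2 hln hk1 hk, smul_add, Finset.smul_sum, hX']
    congr 1
    · apply Finset.sum_congr rfl
      intro m hm
      rw [Finset.mem_Icc] at hm
      have hm1 : m ≠ 1 := by omega
      simp only [hm1, if_false]
      rw [hsmul, hf (m + 1) (by omega)]
      simp only [smul_smul]
      congr 1
      field_simp
    · rw [hf 2 le_rfl]
      simp only [smul_smul]
      congr 1; ring
end
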